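/- Define the 12×12 matrix u over T = k[x,y,z] with rows (x, 0, 0, y², yz², z⁴, 0, −yz, 0, 0, 0, 0), (0, x, 0, −z³, y², yz², z², 0, 0, 0, 0, 0), (0, 0, x, −yz, −z³, y², y, 0, 0, 0, 0, 0), (y, −z², 0, −x, 0, 0, 0, 0, 0, 0, yz, z³), (0, y, −z², 0, −x, 0, 0, 0, 0, 0, 0, 0), (z, 0, y, 0, 0, −x, 0, 0, 0, −y, 0, 0), (0, 0, 0, 0, 0, 0, −x, 0, 0, y², yz², z⁴), (0, 0, 0, 0, 0, 0, 0, −x, 0, −z³, y², yz²), (0, 0, 0, 0, 0, 0, 0, 0, −x, −yz, −z³, y²), (0, 0, 0, 0, 0, 0, y, −z², 0, x, 0, 0), (0, 0, 0, 0, 0, 0, 0, y, −z², 0, x, 0), (0, 0, 0, 0, 0, 0, z, 0, y, 0, 0, x). Then u·u = (x² + y³ + z⁵)·I₁₂, i.e., (u,u) is a symmetric matrix factorization of x² + y³ + z⁵. -/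
import Mathlib


open MvPolynomial

/-- Symmetric matrix factorization of x^2+y^3+z^5 representing the rank-six bundle E_6 of weight type (2,3,5), obtained from 0 → G_3 → E_6 → τ⁻G_3 → 0. -/
noncomputable def uE6_235 (k : Type*) [Field k] :
    Matrix (Fin 12) (Fin 12) (MvPolynomial (Fin 3) k) :=
  let x : MvPolynomial (Fin 3) k := X 0
  let y : MvPolynomial (Fin 3) k := X 1
  let z : MvPolynomial (Fin 3) k := X 2
  !![x, 0, 0, y ^ 2, y * z ^ 2, z ^ 4, 0, -(y * z), 0, 0, 0, 0;
     0, x, 0, -z ^ 3, y ^ 2, y * z ^ 2, z ^ 2, 0, 0, 0, 0, 0;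
     0, 0, x, -(y * z), -z ^ 3, y ^ 2, y, 0, 0, 0, 0, 0;
     y, -z ^ 2, 0, -x, 0, 0, 0, 0, 0, 0, y * z, z ^ 3;
     0, y, -z ^ 2, 0, -x, 0, 0, 0, 0, 0, 0, 0;
     z, 0, y, 0, 0, -x, 0, 0, 0, -y, 0, 0;
     0, 0, 0, 0, 0, 0, -x, 0, 0, y ^ 2, y * z ^ 2, z ^ 4;
     0, 0, 0, 0, 0, 0, 0, -x, 0, -z ^ 3, y ^ 2, y * z ^ 2;
     0, 0, 0, 0, 0, 0, 0, 0, -x, -(y * z), -z ^ 3, y ^ 2;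
     0, 0, 0, 0, 0, 0, y, -z ^ 2, 0, x, 0, 0;
     0, 0, 0, 0, 0, 0, 0, y, -z ^ 2, 0, x, 0;
     0, 0, 0, 0, 0, 0, z, 0, y, 0, 0, x]


section
variable {α : Type*} (a0 a1 a2 a3 a4 a5 a6 a7 a8 a9 a10 a11 : α)
private lemma v12_0 (h : (0:ℕ) < 12) : ![a0, a1, a2, a3, a4, a5, a6, a7, a8, a9, a10, a11] ⟨0, h⟩ = a0 := rfl
private lemma v12_1 (h : (1:ℕ) < 12) : ![a0, a1, a2, a3, a4, a5, a6, a7, a8, a9, a10, a11] ⟨1, h⟩ = a1 := rfl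
private lemma v12_2 (h : (2:ℕ) < 12) : ![a0, a1, a2, a3, a4, a5, a6, a7, a8, a9, a10, a11] ⟨2, h⟩ = a2 := rfl
private lemma v12_3 (h : (3:ℕ) < 12) : ![a0, a1, a2, a3, a4, a5, a6, a7, a8, a9, a10, a11] ⟨3, h⟩ = a3 := rfl
private lemma v12_4 (h : (4:ℕ) < 12) : ![a0, a1, a2, a3, a4, a5, a6, a7, a8, a9, a10, a11] ⟨4, h⟩ = a4 := rfl
private lemma v12_5 (h : (5:ℕ) < 12) : ![a0, a1, a2, a3, a4, a5, a6, a7, a8, a9, a10, a11] ⟨5, h⟩ = a5 := rfl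
private lemma v12_6 (h : (6:ℕ) < 12) : ![a0, a1, a2, a3, a4, a5, a6, a7, a8, a9, a10, a11] ⟨6, h⟩ = a6 := rfl
private lemma v12_7 (h : (7:ℕ) < 12) : ![a0, a1, a2, a3, a4, a5, a6, a7, a8, a9, a10, a11] ⟨7, h⟩ = a7 := rfl
private lemma v12_8 (h : (8:ℕ) < 12) : ![a0, a1, a2, a3, a4, a5, a6, a7, a8, a9, a10, a11] ⟨8, h⟩ = a8 := rfl
private lemma v12_9 (h : (9:ℕ) < 12) : ![a0, a1, a2, a3, a4, a5, a6, a7, a8, a9, a10, a11] ⟨9, h⟩ = a9 := rfl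
private lemma v12_10 (h : (10:ℕ) < 12) : ![a0, a1, a2, a3, a4, a5, a6, a7, a8, a9, a10, a11] ⟨10, h⟩ = a10 := rfl
private lemma v12_11 (h : (11:ℕ) < 12) : ![a0, a1, a2, a3, a4, a5, a6, a7, a8, a9, a10, a11] ⟨11, h⟩ = a11 := rfl
end

set_option maxHeartbeats 4000000 in
theorem stmt_11 (k : Type*) [Field k] :
    uE6_235 k * uE6_235 k =
      ((X 0 ^ 2 + X 1 ^ 3 + X 2 ^ 5 : MvPolynomial (Fin 3) k)) •
        (1 : Matrix (Fin 12) (Fin 12) (MvPolynomial (Fin 3) k)) := by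
  ext i j
  fin_cases i <;> fin_cases j <;>
    simp only [uE6_235, Matrix.mul_apply, Fin.sum_univ_succ, Fin.sum_univ_zero,
      Matrix.cons_val_zero, Matrix.cons_val_succ, Matrix.of_apply, Matrix.smul_apply,
      Matrix.one_apply, smul_eq_mul, v12_0, v12_1, v12_2, v12_3, v12_4, v12_5, v12_6, v12_7, v12_8, v12_9, v12_10, v12_11, Fin.mk.injEq,
      mul_one, mul_zero, zero_mul, add_zero, zero_add, neg_neg, mul_neg, neg_mul] <;>
    norm_num <;> ring
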